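/- arXiv:math/0505012 — 3 statements merged into one kernel-verified Lean document; each statement's English description precedes it below -/
import Mathlib

section
/- Let S be a commutative ring which is a smooth ℂ-algebra (i.e., formally smooth and of finite presentation over ℂ), let α ∈ S be a nonzerodivisor such that the quotient ring S/(α) is also a smooth ℂ-algebra, and let r ≥ 1 be an integer. Then the ring A := S[x]/(x^r − α) is a smooth ℂ-algebra. -/
open Polynomial KaehlerDifferential TensorProduct

noncomputable section RootStackAux

variable {S A : Type} [CommRing S] [CommRing A]
  [Algebra ℂ S] [Algebra ℂ A] [Algebra S A] [Algebra S[X] A]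
  [IsScalarTower ℂ S A] [IsScalarTower S S[X] A] [IsScalarTower ℂ S[X] A]

lemma RootStack.aeval_pX (p : S[X]) :
    aeval (algebraMap S[X] A X) p = algebraMap S[X] A p := by
  have h := Polynomial.aeval_algHom_apply (IsScalarTower.toAlgHom S S[X] A) X p
  rw [Polynomial.aeval_X_left_apply] at h
  simpa using h

/-- Evaluation of an `A`-valued polynomial module over `S` at the image of `X`,
as an `S[X]`-linear map. -/
noncomputable def RootStack.polyEval : PolynomialModule S A →ₗ[S[X]] A where
  toFun q := PolynomialModule.eval (algebraMap S[X] A X)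
    (PolynomialModule.map A (LinearMap.id : A →ₗ[S] A) q)
  map_add' a b := by simp only [map_add]
  map_smul' p q := by
    simp only [RingHom.id_apply, PolynomialModule.map_smul, PolynomialModule.eval_smul,
      Polynomial.eval_map, ← Polynomial.aeval_def, RootStack.aeval_pX, Algebra.smul_def,
      Algebra.algebraMap_self_apply]

@[simp] lemma RootStack.polyEval_single (n : ℕ) (m : A) :
    (RootStack.polyEval (S := S) (A := A)) (PolynomialModule.single S n m)
      = (algebraMap S[X] A X) ^ n * m := by
  show PolynomialModule.eval _ (PolynomialModule.map A (LinearMap.id : A →ₗ[S] A) _) = _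
  rw [PolynomialModule.map_single, PolynomialModule.eval_single]
  simp [smul_eq_mul]

/-- Extension of a derivation `d : S → A` to `S[X]`, sending `X` to `u`. -/
noncomputable def RootStack.extDer (d : Derivation ℂ S A) (u : A) : Derivation ℂ S[X] A :=
  RootStack.polyEval.compDer d.mapCoeffs + (Polynomial.mkDerivation S u).restrictScalars ℂ

lemma RootStack.extDer_C (d : Derivation ℂ S A) (u : A) (s : S) :
    RootStack.extDer d u (C s) = d s := by
  show RootStack.polyEval (d.mapCoeffs (C s)) + (Polynomial.mkDerivation S u) (C s) = d s
  rw [Derivation.mapCoeffs_C, Polynomial.mkDerivation_apply, derivative_C, zero_smul,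
    add_zero, RootStack.polyEval_single, pow_zero, one_mul]

lemma RootStack.extDer_X (d : Derivation ℂ S A) (u : A) :
    RootStack.extDer d u X = u := by
  show RootStack.polyEval (d.mapCoeffs X) + (Polynomial.mkDerivation S u) X = u
  rw [Derivation.mapCoeffs_X, map_zero, Polynomial.mkDerivation_X, zero_add]

end RootStackAux

set_option maxHeartbeats 1000000 in
/-- Existence of a derivation `d : S → S` with `d α = 1 + b * α`, given that `S` and
`S/(α)` are formally smooth over `ℂ` and `α` is a nonzerodivisor. -/
lemma RootStack.exists_der (S : Type) [CommRing S] [Algebra ℂ S]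
    [Algebra.FormallySmooth ℂ S] (α : S) (hα : α ∈ nonZeroDivisors S)
    [Algebra.FormallySmooth ℂ (S ⧸ Ideal.span ({α} : Set S))] :
    ∃ (d : Derivation ℂ S S) (b : S), d α = 1 + b * α := by
  set I : Ideal S := Ideal.span {α} with hI
  have hf : Function.Surjective (algebraMap S (S ⧸ I)) := by
    rw [Ideal.Quotient.algebraMap_eq]; exact Ideal.Quotient.mk_surjective
  let K : Ideal S := RingHom.ker (algebraMap S (S ⧸ I))
  obtain ⟨l, hl⟩ := (Algebra.FormallySmooth.iff_split_injection (R := ℂ) hf).mp inferInstance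
  have hK : K = I := by
    show RingHom.ker (algebraMap S (S ⧸ I)) = I
    rw [Ideal.Quotient.algebraMap_eq, Ideal.mk_ker]
  have hαK : α ∈ K := by rw [hK]; exact Ideal.subset_span rfl
  set ξ : K.Cotangent := K.toCotangent ⟨α, hαK⟩ with hξ
  set d₀ : Derivation ℂ S K.Cotangent :=
    (l ∘ₗ (TensorProduct.mk S (S ⧸ I) (Ω[S⁄ℂ]) 1)).compDer (KaehlerDifferential.D ℂ S) with hd₀def
  have hd₀ : d₀ α = ξ := by
    calc d₀ α = l (kerCotangentToTensor ℂ S (S ⧸ I) (K.toCotangent ⟨α, hαK⟩)) := by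
          rw [kerCotangentToTensor_toCotangent]; rfl
    _ = ξ := LinearMap.congr_fun hl _
  set σ : S →ₗ[S] K.Cotangent := LinearMap.toSpanSingleton S K.Cotangent ξ with hσ
  have hsmul : ∀ c : S, c • ξ = K.toCotangent ⟨c * α, K.mul_mem_left c hαK⟩ := by
    intro c
    rw [hξ, ← map_smul]
    congr 1
  have hker : I ≤ LinearMap.ker σ := by
    intro c hc
    simp only [LinearMap.mem_ker, hσ, LinearMap.toSpanSingleton_apply]
    rw [hsmul, Ideal.toCotangent_eq_zero]
    show c * α ∈ K ^ 2
    rw [hK, pow_two]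
    exact Ideal.mul_mem_mul hc (Ideal.subset_span rfl)
  set τ : (S ⧸ I) →ₗ[S] K.Cotangent := Submodule.liftQ I σ hker with hτ
  have hτmk : ∀ c : S, τ (algebraMap S (S ⧸ I) c) = c • ξ := fun c => rfl
  have hsurj : Function.Surjective τ := by
    intro z
    obtain ⟨⟨y, hy⟩, rfl⟩ := K.toCotangent_surjective z
    have hy' : y ∈ I := by rw [← hK]; exact hy
    obtain ⟨c, hc⟩ := Ideal.mem_span_singleton'.mp hy'
    refine ⟨algebraMap S (S ⧸ I) c, ?_⟩
    rw [hτmk, hsmul]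
    congr 1
    exact Subtype.ext hc
  have hinj : Function.Injective τ := by
    rw [injective_iff_map_eq_zero]
    intro q hq
    obtain ⟨c, rfl⟩ := hf q
    rw [hτmk, hsmul, Ideal.toCotangent_eq_zero] at hq
    have hq2 : c * α ∈ I ^ 2 := by rw [← hK]; exact hq
    rw [hI, Ideal.span_singleton_pow] at hq2
    obtain ⟨s, hs⟩ := Ideal.mem_span_singleton'.mp hq2
    have h0 : (c - s * α) * α = 0 := by
      rw [sub_mul, ← hs]; ring
    have hc0 : c - s * α = 0 := hα.2 _ h0
    have hcI : c ∈ I := by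
      rw [sub_eq_zero.mp hc0]
      exact Ideal.mul_mem_left _ _ (Ideal.subset_span rfl)
    exact (Ideal.Quotient.eq_zero_iff_mem.mpr hcI : Ideal.Quotient.mk I c = 0)
  set e := LinearEquiv.ofBijective τ ⟨hinj, hsurj⟩ with he
  set d₂ : Derivation ℂ S (S ⧸ I) := (e.symm.toLinearMap).compDer d₀ with hd₂def
  have hd₂ : d₂ α = 1 := by
    have h1 : τ 1 = ξ := by
      rw [show (1 : S ⧸ I) = algebraMap S (S ⧸ I) 1 from (map_one _).symm, hτmk, one_smul]
    have : d₂ α = e.symm (d₀ α) := rfl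
    rw [this, hd₀, ← h1, show τ 1 = e 1 from rfl, e.symm_apply_apply]
  obtain ⟨h₁, hh₁⟩ := Module.projective_lifting_property (Algebra.linearMap S (S ⧸ I))
      d₂.liftKaehlerDifferential hf
  set d : Derivation ℂ S S := h₁.compDer (KaehlerDifferential.D ℂ S) with hd
  have key : algebraMap S (S ⧸ I) (d α) = 1 := by
    have h2 := LinearMap.congr_fun hh₁ (KaehlerDifferential.D ℂ S α)
    rw [Derivation.liftKaehlerDifferential_comp_D] at h2
    rw [show d α = h₁ (KaehlerDifferential.D ℂ S α) from rfl, ← hd₂]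
    exact h2
  have hmem : d α - 1 ∈ I := by
    have h3 : algebraMap S (S ⧸ I) (d α - 1) = 0 := by
      rw [map_sub, key, map_one, sub_self]
    exact Ideal.Quotient.eq_zero_iff_mem.mp h3
  obtain ⟨b, hb⟩ := Ideal.mem_span_singleton'.mp hmem
  exact ⟨d, b, by linear_combination -hb⟩

set_option maxHeartbeats 1000000 in
theorem root_stack_chart_smooth
    (S : Type) [CommRing S] [Algebra ℂ S] (hS : Algebra.Smooth ℂ S)
    (α : S) (hα : α ∈ nonZeroDivisors S)
    (hquot : Algebra.Smooth ℂ (S ⧸ Ideal.span ({α} : Set S)))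
    (r : ℕ) (hr : 1 ≤ r) :
    Algebra.Smooth ℂ
      (Polynomial S ⧸ Ideal.span ({Polynomial.X ^ r - Polynomial.C α} : Set (Polynomial S))) := by
  classical
  haveI := hS.formallySmooth
  haveI := hS.finitePresentation
  haveI := hquot.formallySmooth
  set g : S[X] := X ^ r - C α with hg
  set J : Ideal S[X] := Ideal.span {g} with hJ
  haveI : Algebra.FormallySmooth ℂ S[X] := Algebra.FormallySmooth.comp ℂ S S[X]
  haveI : Algebra.FinitePresentation ℂ S[X] := Algebra.FinitePresentation.trans ℂ S S[X]
  have hFP : Algebra.FinitePresentation ℂ (S[X] ⧸ J) :=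
    Algebra.FinitePresentation.quotient (Submodule.fg_span (Set.finite_singleton g))
  have hfA : Function.Surjective (algebraMap S[X] (S[X] ⧸ J)) := by
    rw [Ideal.Quotient.algebraMap_eq]; exact Ideal.Quotient.mk_surjective
  have hFSm : Algebra.FormallySmooth ℂ (S[X] ⧸ J) := by
    rw [Algebra.FormallySmooth.iff_split_injection (R := ℂ) hfA]
    set K := RingHom.ker (algebraMap S[X] (S[X] ⧸ J)) with hKdef
    have hK : K = J := by rw [hKdef, Ideal.Quotient.algebraMap_eq, Ideal.mk_ker]
    have hgJ : g ∈ J := Ideal.subset_span rfl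
    have hgK : g ∈ K := by rw [hK]; exact hgJ
    obtain ⟨d, b, hdb⟩ := RootStack.exists_der S α hα
    set x : S[X] ⧸ J := algebraMap S[X] (S[X] ⧸ J) X with hx
    have hg0 : algebraMap S[X] (S[X] ⧸ J) g = 0 := by
      rw [Ideal.Quotient.algebraMap_eq, Ideal.Quotient.eq_zero_iff_mem]; exact hgJ
    have hg0mk : Ideal.Quotient.mk J g = 0 := hg0
    have hxr : algebraMap S (S[X] ⧸ J) α = x ^ r := by
      have h0 : algebraMap S[X] (S[X] ⧸ J) (X ^ r) - algebraMap S[X] (S[X] ⧸ J) (C α) = 0 := by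
        rw [← map_sub]; exact hg0
      have h1 : algebraMap S[X] (S[X] ⧸ J) (X ^ r) = algebraMap S[X] (S[X] ⧸ J) (C α) :=
        sub_eq_zero.mp h0
      rw [IsScalarTower.algebraMap_apply S S[X] (S[X] ⧸ J), Polynomial.algebraMap_eq, ← h1,
        map_pow, hx]
    set dA : Derivation ℂ S (S[X] ⧸ J) := (Algebra.linearMap S (S[X] ⧸ J)).compDer d with hdA
    set β : S[X] ⧸ J := algebraMap S (S[X] ⧸ J) b with hβ
    have hrC : ((r : ℂ)) ≠ 0 := Nat.cast_ne_zero.mpr (by omega)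
    set u : S[X] ⧸ J := (r : ℂ)⁻¹ • (β * x) with hu
    set E : Derivation ℂ S[X] (S[X] ⧸ J) := RootStack.extDer dA u with hE
    have hdAα : dA α = 1 + β * x ^ r := by
      show algebraMap S (S[X] ⧸ J) (d α) = _
      rw [hdb, map_add, map_one, map_mul, ← hβ, hxr]
    have bridge : ∀ (p : S[X]) (m : S[X] ⧸ J), p • m = Ideal.Quotient.mk J p * m := by
      intro p m
      obtain ⟨t, rfl⟩ := Ideal.Quotient.mk_surjective (I := J) m
      rw [← map_mul]
      exact (Submodule.Quotient.mk_smul J p t).symm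
    have hEg : E g = -1 := by
      rw [hg, map_sub, Derivation.leibniz_pow, hE, RootStack.extDer_X, RootStack.extDer_C, hdAα,
        bridge, show ((Ideal.Quotient.mk J) ((X : S[X]) ^ (r - 1)) : S[X] ⧸ J) = x ^ (r - 1)
          from by rw [map_pow]; rfl,
        hu, mul_smul_comm, ← Nat.cast_smul_eq_nsmul ℂ,
        smul_smul, mul_inv_cancel₀ hrC, one_smul,
        show x ^ (r - 1) * (β * x) = β * x ^ (r - 1 + 1) from by rw [pow_succ]; ring,
        show r - 1 + 1 = r from by omega]
      ring
    set D : Derivation ℂ S[X] (S[X] ⧸ J) := -E with hD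
    have hDg : D g = 1 := by rw [hD, Derivation.neg_apply, hEg, neg_neg]
    -- construct the retraction
    set ξ : K.Cotangent := K.toCotangent ⟨g, hgK⟩ with hξ
    have hsmul : ∀ p : S[X], p • ξ = K.toCotangent ⟨p * g, K.mul_mem_left p hgK⟩ := by
      intro p
      rw [hξ, ← map_smul]
      congr 1
    set ν₀ : S[X] →ₗ[S[X]] K.Cotangent := LinearMap.toSpanSingleton S[X] K.Cotangent ξ with hν₀
    have hν : J ≤ LinearMap.ker ν₀ := by
      intro p hp
      simp only [LinearMap.mem_ker, hν₀, LinearMap.toSpanSingleton_apply]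
      rw [hsmul, Ideal.toCotangent_eq_zero]
      show p * g ∈ K ^ 2
      rw [hK, pow_two]
      exact Ideal.mul_mem_mul hp hgJ
    set ν : (S[X] ⧸ J) →ₗ[S[X]] K.Cotangent := Submodule.liftQ J ν₀ hν with hνdef
    have hνmk : ∀ p : S[X], ν (algebraMap S[X] (S[X] ⧸ J) p) = p • ξ := fun p => rfl
    set lb : (S[X] ⧸ J) ⊗[S[X]] Ω[S[X]⁄ℂ] →ₗ[S[X] ⧸ J] (S[X] ⧸ J) :=
      LinearMap.liftBaseChange (S[X] ⧸ J) D.liftKaehlerDifferential with hlb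
    refine ⟨ν ∘ₗ (lb.restrictScalars S[X]), ?_⟩
    apply LinearMap.ext
    intro z
    obtain ⟨⟨p, hp⟩, rfl⟩ :=
      Ideal.toCotangent_surjective (I := RingHom.ker (algebraMap S[X] (S[X] ⧸ J))) z
    simp only [LinearMap.comp_apply, LinearMap.id_apply]
    rw [kerCotangentToTensor_toCotangent]
    simp only [LinearMap.restrictScalars_apply, hlb,
      LinearMap.liftBaseChange_tmul, one_smul,
      Derivation.liftKaehlerDifferential_comp_D]
    show ν (D p) = K.toCotangent ⟨p, hp⟩
    have hpJ : p ∈ J := by rw [← hK]; exact hp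
    have hpJ' : p ∈ Ideal.span {g} := hpJ
    obtain ⟨q, hq⟩ := Ideal.mem_span_singleton'.mp hpJ' 
    have h5 : D p = algebraMap S[X] (S[X] ⧸ J) q := by
      rw [← hq, Derivation.leibniz, hDg, bridge, bridge, hg0mk,
        zero_mul, add_zero, mul_one]
      rfl
    rw [h5, hνmk, hsmul]
    exact congrArg K.toCotangent (Subtype.ext hq)
  exact ⟨hFSm, hFP⟩
end

section
/- Let S be a commutative ℂ-algebra, let r ≥ 1 be an integer, let α ∈ S, let A := S[x]/(x^r − α), let σ : S → A be the canonical ring homomorphism, and let x̄ ∈ A denote the class of x. Given a ℂ-linear derivation δ : S → S, there exists a ℂ-linear derivation D : A → A with D(σ(s)) = σ(δ(s)) for all s ∈ S if and only if σ(δ(α)) lies in the ideal x̄^{r−1}A. -/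
set_option maxHeartbeats 1000000

open Polynomial

section Aux
variable {S : Type} [CommRing S] [Algebra ℂ S] (δ : Derivation ℂ S S)

noncomputable def coeffD : S[X] →ₗ[ℂ] S[X] where
  toFun p := ⟨AddMonoidAlgebra.ofCoeff (Finsupp.mapRange.linearMap δ.toLinearMap p.toFinsupp.coeff)⟩
  map_add' p q := by
    ext n
    simp [Polynomial.coeff]
  map_smul' c p := by
    ext n
    simp [Polynomial.coeff]

lemma coeff_coeffD (p : S[X]) (n : ℕ) : (coeffD δ p).coeff n = δ (p.coeff n) := by
  simp [coeffD, Polynomial.coeff]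

lemma coeffD_C (a : S) : coeffD δ (C a) = C (δ a) := by
  ext n; simp [coeff_coeffD, coeff_C, apply_ite δ]

lemma coeffD_X_pow (k : ℕ) : coeffD δ (X ^ k) = 0 := by
  ext n; simp [coeff_coeffD, coeff_X_pow, apply_ite δ]

lemma coeffD_mul (p q : S[X]) :
    coeffD δ (p * q) = p * coeffD δ q + coeffD δ p * q := by
  ext n
  simp only [coeff_coeffD, coeff_add, coeff_mul, map_sum]
  rw [← Finset.sum_add_distrib]
  refine Finset.sum_congr rfl fun x _ => ?_
  simp [coeff_coeffD, Derivation.leibniz, smul_eq_mul, mul_comm]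


end Aux



/-- Let `S` be a commutative ℂ-algebra, `r ≥ 1` an integer, `α ∈ S`,
`A := S[x]/(x^r - α)`, `σ : S → A` the canonical ring homomorphism, and `x̄ ∈ A` the class
of `x`.  Given a ℂ-linear derivation `δ : S → S`, there exists a ℂ-linear derivation
`D : A → A` with `D(σ s) = σ(δ s)` for all `s ∈ S` if and only if `σ(δ α)` lies in the
ideal `x̄^(r-1) A`. -/
theorem derivation_extension_criterion
    (S : Type) [CommRing S] [Algebra ℂ S]
    (r : ℕ) (hr : 1 ≤ r) (α : S) (δ : Derivation ℂ S S) :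
    (∃ D : Derivation ℂ
      (Polynomial S ⧸ Ideal.span ({Polynomial.X ^ r - Polynomial.C α} : Set (Polynomial S)))
      (Polynomial S ⧸ Ideal.span ({Polynomial.X ^ r - Polynomial.C α} : Set (Polynomial S))),
      ∀ s : S,
        D (Ideal.Quotient.mk
            (Ideal.span ({Polynomial.X ^ r - Polynomial.C α} : Set (Polynomial S)))
            (Polynomial.C s)) =
        Ideal.Quotient.mk
            (Ideal.span ({Polynomial.X ^ r - Polynomial.C α} : Set (Polynomial S)))
            (Polynomial.C (δ s))) ↔
    Ideal.Quotient.mk (Ideal.span ({Polynomial.X ^ r - Polynomial.C α} : Set (Polynomial S)))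
        (Polynomial.C (δ α)) ∈
      Ideal.span
        {Ideal.Quotient.mk (Ideal.span ({Polynomial.X ^ r - Polynomial.C α} : Set (Polynomial S)))
          (Polynomial.X ^ (r - 1))} := by
  set I : Ideal S[X] := Ideal.span ({X ^ r - C α} : Set S[X]) with hI
  set π : S[X] →+* S[X] ⧸ I := Ideal.Quotient.mk I with hπ
  have hgen0 : π (X ^ r - C α) = 0 :=
    Ideal.Quotient.eq_zero_iff_mem.2 (Ideal.subset_span rfl)
  have hxr : (π X) ^ r = π (C α) := by
    have := hgen0
    rw [map_sub, sub_eq_zero, map_pow] at this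
    exact this
  constructor
  · rintro ⟨D, hD⟩
    rw [Ideal.mem_span_singleton]
    refine ⟨r • D (π X), ?_⟩
    have h1 : D ((π X) ^ r) = π (C (δ α)) := by rw [hxr, hD]
    rw [Derivation.leibniz_pow] at h1
    rw [← h1, map_pow]
    rw [smul_comm, smul_eq_mul]
  · intro hmem
    rw [Ideal.mem_span_singleton] at hmem
    obtain ⟨c, hc⟩ := hmem
    set t : S[X] ⧸ I := ((r : ℂ)⁻¹) • c with ht
    let πₗ : S[X] →ₗ[ℂ] S[X] ⧸ I := (Ideal.Quotient.mkₐ ℂ I).toLinearMap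
    let D₀ : S[X] →ₗ[ℂ] S[X] ⧸ I :=
      πₗ ∘ₗ coeffD δ + t • (πₗ ∘ₗ (Polynomial.derivative (R := S)).restrictScalars ℂ)
    have hD₀ : ∀ p : S[X], D₀ p = π (coeffD δ p) + t * π (derivative p) := fun p => by
      simp [D₀, πₗ, smul_eq_mul, hπ]
    have hrC : (r : ℂ) ≠ 0 := by
      exact Nat.cast_ne_zero.2 (by omega)
    have hrt : (r : S[X] ⧸ I) * t = c := by
      rw [ht, ← map_natCast (algebraMap ℂ (S[X] ⧸ I)) r, ← Algebra.smul_def, smul_smul,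
        mul_inv_cancel₀ hrC, one_smul]
    have hgen : D₀ (X ^ r - C α) = 0 := by
      rw [hD₀, map_sub, coeffD_X_pow, coeffD_C, zero_sub, derivative_sub, derivative_C,
        sub_zero, derivative_X_pow, map_neg, map_mul, map_pow, Polynomial.C_eq_natCast,
        map_natCast, hc, map_pow, ← hrt]
      ring
    have hLeib : ∀ p q : S[X], D₀ (p * q) = π p * D₀ q + π q * D₀ p := fun p q => by
      rw [hD₀, hD₀, hD₀, coeffD_mul, derivative_mul]
      simp only [map_add, map_mul]
      ring
    have hker : ∀ z ∈ I, D₀ z = 0 := fun z hz => by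
      obtain ⟨q, hq⟩ := Ideal.mem_span_singleton'.1 hz
      rw [← hq, hLeib, hgen, mul_zero, hgen0, zero_mul, add_zero]
    let Dlin : (S[X] ⧸ I) →ₗ[ℂ] (S[X] ⧸ I) :=
      (Submodule.liftQ (I.restrictScalars ℂ) D₀ fun z hz => hker z hz) ∘ₗ
        ((Submodule.Quotient.restrictScalarsEquiv ℂ I).symm : (S[X] ⧸ I) →ₗ[ℂ] _)
    have hDlin : ∀ p : S[X], Dlin (π p) = D₀ p := fun p => rfl
    refine ⟨{ toLinearMap := Dlin, map_one_eq_zero' := ?_, leibniz' := ?_ }, ?_⟩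
    · show Dlin (π 1) = 0
      rw [hDlin, hD₀]
      rw [← Polynomial.C_1, coeffD_C, derivative_C, map_zero, mul_zero, add_zero,
        Derivation.map_one_eq_zero, map_zero]
      exact map_zero π
    · intro a b
      obtain ⟨p, rfl⟩ := Ideal.Quotient.mk_surjective a
      obtain ⟨q, rfl⟩ := Ideal.Quotient.mk_surjective b
      show Dlin (π p * π q) = _
      rw [← map_mul, hDlin, hLeib]
      show _ = π p • Dlin (π q) + π q • Dlin (π p)
      rw [hDlin, hDlin, smul_eq_mul, smul_eq_mul]
    · intro s
      show Dlin (π (C s)) = π (C (δ s))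
      rw [hDlin, hD₀, coeffD_C]
      simp
end

section
/- Suppose Γ satisfies the relation Γ₂₂₂ = Γ₁₁₂² − Γ₁₁₁Γ₁₂₂ + 2(2Γ₁₂₃Γ₁₂₄ − Γ₁₁₃Γ₂₂₄ − Γ₁₁₄Γ₂₂₃) in ℚ[[y₁,y₂,y₃,y₄,q]]. Then for all integers d ≥ 1, n₂ ≥ 3 and n₃, n₄ ≥ 0: c_d(n₂,n₃,n₄) = Σ_{d₁+d₂=d} Σ_{p⃗+q⃗=(n₂−1,n₃,n₄)} c_{d₁}(p⃗)c_{d₂}(q⃗)·C(n₃,p₃)C(n₄,p₄)·[d₁²d₂²·C(n₂−3,p₂−1) − d₁³d₂·C(n₂−3,p₂)] + Σ_{d₁+d₂=d} Σ_{p⃗+q⃗=(n₂−1,n₃+1,n₄+1)} 2c_{d₁}(p⃗)c_{d₂}(q⃗)·C(n₃,p₃−1)C(n₄,p₄)·[2d₁d₂·C(n₂−3,p₂−1) − d₁²·C(n₂−3,p₂) − d₂²·C(n₂−3,p₂−2)]. -/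
/- Variables: index `0 ↦ y₁`, `1 ↦ y₂`, `2 ↦ y₃`, `3 ↦ y₄`, `4 ↦ q` in
`ℚ[[y₁,y₂,y₃,y₄,q]] = MvPowerSeries (Fin 5) ℚ`. -/

/-- Formal partial derivative `∂/∂yᵢ` of a multivariate power series. -/
noncomputable def pd (i : Fin 5) (f : MvPowerSeries (Fin 5) ℚ) : MvPowerSeries (Fin 5) ℚ :=
  fun s => ((s i : ℚ) + 1) * MvPowerSeries.coeff (s + Finsupp.single i 1) f

/-- Binomial coefficient `C(n,k)`, defined to be `0` unless `0 ≤ k ≤ n`. -/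
def Cz (n k : ℤ) : ℚ := if 0 ≤ k ∧ k ≤ n then ((n.toNat).choose k.toNat : ℚ) else 0

namespace Rec1

noncomputable def mk (m i j k l : ℕ) : Fin 5 →₀ ℕ := Finsupp.equivFunOnFinite.symm ![m,i,j,k,l]

@[simp] lemma mk_a0 (m i j k l : ℕ) : mk m i j k l 0 = m := rfl
@[simp] lemma mk_a1 (m i j k l : ℕ) : mk m i j k l 1 = i := rfl
@[simp] lemma mk_a2 (m i j k l : ℕ) : mk m i j k l 2 = j := rfl
@[simp] lemma mk_a3 (m i j k l : ℕ) : mk m i j k l 3 = k := rfl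
@[simp] lemma mk_a4 (m i j k l : ℕ) : mk m i j k l 4 = l := rfl

lemma mk_eq (u : Fin 5 →₀ ℕ) : u = mk (u 0) (u 1) (u 2) (u 3) (u 4) := by
  ext t; fin_cases t <;> rfl

lemma mk_add (m i j k l m' i' j' k' l' : ℕ) :
    mk m i j k l + mk m' i' j' k' l' = mk (m+m') (i+i') (j+j') (k+k') (l+l') := by
  ext t; fin_cases t <;> rfl

@[simp] lemma adds0 (m i j k l : ℕ) : mk m i j k l + Finsupp.single 0 1 = mk (m+1) i j k l := by
  ext t; fin_cases t <;> simp [mk, Finsupp.single_apply]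
@[simp] lemma adds1 (m i j k l : ℕ) : mk m i j k l + Finsupp.single 1 1 = mk m (i+1) j k l := by
  ext t; fin_cases t <;> simp [mk, Finsupp.single_apply]
@[simp] lemma adds2 (m i j k l : ℕ) : mk m i j k l + Finsupp.single 2 1 = mk m i (j+1) k l := by
  ext t; fin_cases t <;> simp [mk, Finsupp.single_apply]
@[simp] lemma adds3 (m i j k l : ℕ) : mk m i j k l + Finsupp.single 3 1 = mk m i j (k+1) l := by
  ext t; fin_cases t <;> simp [mk, Finsupp.single_apply]

lemma cpd (x : Fin 5) (u : Fin 5 →₀ ℕ) (f : MvPowerSeries (Fin 5) ℚ) :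
    MvPowerSeries.coeff u (pd x f) = ((u x : ℚ) + 1) * MvPowerSeries.coeff (u + Finsupp.single x 1) f := rfl

lemma antidiag_sum (n b e d : ℕ) (F : (Fin 5 →₀ ℕ) → (Fin 5 →₀ ℕ) → ℚ) :
    ∑ p ∈ Finset.HasAntidiagonal.antidiagonal (mk 0 n b e d), F p.1 p.2 =
      ∑ l ∈ Finset.range (d+1), ∑ i ∈ Finset.range (n+1), ∑ j ∈ Finset.range (b+1),
        ∑ k ∈ Finset.range (e+1), F (mk 0 i j k l) (mk 0 (n-i) (b-j) (e-k) (d-l)) := by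
  rw [← Finset.sum_product', ← Finset.sum_product', ← Finset.sum_product']
  refine Finset.sum_nbij' (fun p => (((p.1 4, p.1 1), p.1 2), p.1 3))
    (fun x => (mk 0 x.1.1.2 x.1.2 x.2 x.1.1.1, mk 0 (n - x.1.1.2) (b - x.1.2) (e - x.2) (d - x.1.1.1)))
    ?_ ?_ ?_ ?_ ?_
  · intro p hp
    rw [Finset.HasAntidiagonal.mem_antidiagonal] at hp
    have h1 : p.1 1 + p.2 1 = n := by have := congrArg (fun u => u 1) hp; simpa using this
    have h2 : p.1 2 + p.2 2 = b := by have := congrArg (fun u => u 2) hp; simpa using this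
    have h3 : p.1 3 + p.2 3 = e := by have := congrArg (fun u => u 3) hp; simpa using this
    have h4 : p.1 4 + p.2 4 = d := by have := congrArg (fun u => u 4) hp; simpa using this
    simp only [Finset.mem_product, Finset.mem_range]
    omega
  · intro x hx
    simp only [Finset.mem_product, Finset.mem_range] at hx
    rw [Finset.HasAntidiagonal.mem_antidiagonal, mk_add]
    congr 1 <;> omega
  · intro p hp
    rw [Finset.HasAntidiagonal.mem_antidiagonal] at hp
    have h0 : p.1 0 + p.2 0 = 0 := by have := congrArg (fun u => u 0) hp; simpa using this
    have h1 : p.1 1 + p.2 1 = n := by have := congrArg (fun u => u 1) hp; simpa using this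
    have h2 : p.1 2 + p.2 2 = b := by have := congrArg (fun u => u 2) hp; simpa using this
    have h3 : p.1 3 + p.2 3 = e := by have := congrArg (fun u => u 3) hp; simpa using this
    have h4 : p.1 4 + p.2 4 = d := by have := congrArg (fun u => u 4) hp; simpa using this
    have e1 : p.1 = mk 0 (p.1 1) (p.1 2) (p.1 3) (p.1 4) := by
      conv_lhs => rw [mk_eq p.1]
      congr 1; omega
    have e2 : p.2 = mk 0 (n - p.1 1) (b - p.1 2) (e - p.1 3) (d - p.1 4) := by
      conv_lhs => rw [mk_eq p.2]
      congr 1 <;> omega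
    exact Prod.ext e1.symm e2.symm
  · intro x hx; rfl
  · intro p hp
    rw [Finset.HasAntidiagonal.mem_antidiagonal] at hp
    have h0 : p.1 0 + p.2 0 = 0 := by have := congrArg (fun u => u 0) hp; simpa using this
    have h1 : p.1 1 + p.2 1 = n := by have := congrArg (fun u => u 1) hp; simpa using this
    have h2 : p.1 2 + p.2 2 = b := by have := congrArg (fun u => u 2) hp; simpa using this
    have h3 : p.1 3 + p.2 3 = e := by have := congrArg (fun u => u 3) hp; simpa using this
    have h4 : p.1 4 + p.2 4 = d := by have := congrArg (fun u => u 4) hp; simpa using this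
    have e1 : p.1 = mk 0 (p.1 1) (p.1 2) (p.1 3) (p.1 4) := by
      conv_lhs => rw [mk_eq p.1]
      congr 1; omega
    have e2 : p.2 = mk 0 (n - p.1 1) (b - p.1 2) (e - p.1 3) (d - p.1 4) := by
      conv_lhs => rw [mk_eq p.2]
      congr 1 <;> omega
    show F p.1 p.2 = F (mk 0 (p.1 1) (p.1 2) (p.1 3) (p.1 4)) (mk 0 (n - p.1 1) (b - p.1 2) (e - p.1 3) (d - p.1 4))
    rw [← e1, ← e2]

lemma coeff_mul_mk (n b e d : ℕ) (f g : MvPowerSeries (Fin 5) ℚ) :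
    MvPowerSeries.coeff (mk 0 n b e d) (f * g) =
      ∑ l ∈ Finset.range (d+1), ∑ i ∈ Finset.range (n+1), ∑ j ∈ Finset.range (b+1),
        ∑ k ∈ Finset.range (e+1), MvPowerSeries.coeff (mk 0 i j k l) f *
          MvPowerSeries.coeff (mk 0 (n-i) (b-j) (e-k) (d-l)) g := by
  rw [MvPowerSeries.coeff_mul]
  exact antidiag_sum n b e d (fun u v => MvPowerSeries.coeff u f * MvPowerSeries.coeff v g)

/- ## sum shifting lemmas -/

lemma sum_Ioo_ext (d : ℕ) (f : ℕ → ℚ) (h0 : f 0 = 0) (hd : f d = 0) :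
    ∑ x ∈ Finset.Ioo 0 d, f x = ∑ x ∈ Finset.range (d+1), f x := by
  apply Finset.sum_subset
  · intro x hx; rw [Finset.mem_Ioo] at hx; rw [Finset.mem_range]; omega
  · intro x hx hxn
    rw [Finset.mem_range] at hx
    rw [Finset.mem_Ioo] at hxn
    have hh : x = 0 ∨ x = d := by omega
    rcases hh with h|h <;> subst h <;> assumption

lemma sum_shift1 (M : ℕ) (f : ℕ → ℚ) (h0 : f 0 = 0) (hT : f (M+2) = 0) :
    ∑ p ∈ Finset.range (M+3), f p = ∑ i ∈ Finset.range (M+1), f (i+1) := by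
  rw [show M+3 = (M+2)+1 from rfl, Finset.sum_range_succ, hT, add_zero,
    Finset.sum_range_succ', h0, add_zero]

lemma sum_shift0 (M : ℕ) (f : ℕ → ℚ) (h1 : f (M+1) = 0) (h2 : f (M+2) = 0) :
    ∑ p ∈ Finset.range (M+3), f p = ∑ i ∈ Finset.range (M+1), f i := by
  rw [show M+3 = (M+2)+1 from rfl, Finset.sum_range_succ, h2, add_zero,
    Finset.sum_range_succ, h1, add_zero]

lemma sum_shift2 (M : ℕ) (f : ℕ → ℚ) (h0 : f 0 = 0) (h1 : f 1 = 0) :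
    ∑ p ∈ Finset.range (M+3), f p = ∑ i ∈ Finset.range (M+1), f (i+2) := by
  rw [show M+3 = (M+2)+1 from rfl, Finset.sum_range_succ', h0, add_zero,
    Finset.sum_range_succ']
  simp only [h1, add_zero]

lemma sum_shiftd1 (M : ℕ) (f : ℕ → ℚ) (h0 : f 0 = 0) :
    ∑ p ∈ Finset.range (M+2), f p = ∑ i ∈ Finset.range (M+1), f (i+1) := by
  rw [show M+2 = (M+1)+1 from rfl, Finset.sum_range_succ', h0, add_zero]

lemma sum_trunc (M : ℕ) (f : ℕ → ℚ) (hT : f (M+1) = 0) :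
    ∑ p ∈ Finset.range (M+2), f p = ∑ i ∈ Finset.range (M+1), f i := by
  rw [show M+2 = (M+1)+1 from rfl, Finset.sum_range_succ, hT, add_zero]

lemma r1 (M : ℕ) (g : ℕ → ℚ) :
    ∑ x ∈ Finset.range (M+1), g x = ∑ x ∈ Finset.range (M+1), g (M - x) := by
  refine (Finset.sum_range_reflect g (M+1)).symm.trans ?_
  exact Finset.sum_congr rfl fun x _ => by congr 1 <;> omega

lemma refl4 (D N B E : ℕ) (f : ℕ → ℕ → ℕ → ℕ → ℚ) :
    (∑ l ∈ Finset.range (D+1), ∑ i ∈ Finset.range (N+1), ∑ j ∈ Finset.range (B+1),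
      ∑ k ∈ Finset.range (E+1), f l i j k) =
    ∑ l ∈ Finset.range (D+1), ∑ i ∈ Finset.range (N+1), ∑ j ∈ Finset.range (B+1),
      ∑ k ∈ Finset.range (E+1), f (D-l) (N-i) (B-j) (E-k) := by
  rw [r1 D]
  refine Finset.sum_congr rfl fun l _ => ?_
  rw [r1 N]
  refine Finset.sum_congr rfl fun i _ => ?_
  rw [r1 B]
  refine Finset.sum_congr rfl fun j _ => ?_
  exact r1 E _

/- ## Cz lemmas -/

lemma Cz_eq_zero {a k : ℤ} (h : ¬(0 ≤ k ∧ k ≤ a)) : Cz a k = 0 := if_neg h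

lemma Cz_neg1 (a : ℤ) : Cz a (-1) = 0 := Cz_eq_zero (by omega)
lemma Cz_negtwo (a : ℤ) : Cz a (-2) = 0 := Cz_eq_zero (by omega)
lemma Cz_one_sub_two (a : ℤ) : Cz a (1-2) = 0 := Cz_eq_zero (by omega)
lemma Cz_top1 (a : ℕ) : Cz (a:ℤ) ((a:ℕ)+1 : ℕ) = 0 := Cz_eq_zero (by push_cast; omega)
lemma Cz_top1' (a : ℕ) : Cz (a:ℤ) ((a:ℤ)+1) = 0 := Cz_eq_zero (by omega)
lemma Cz_top2 (a : ℕ) : Cz (a:ℤ) ((a:ℕ)+2 : ℕ) = 0 := Cz_eq_zero (by push_cast; omega)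
lemma Cz_top2' (a : ℕ) : Cz (a:ℤ) ((a:ℤ)+2) = 0 := Cz_eq_zero (by omega)
lemma CzX1 (a : ℕ) : Cz (a:ℤ) ((((a:ℕ)+2 : ℕ) : ℤ) - 1) = 0 := Cz_eq_zero (by push_cast; omega)
lemma CzX1' (a : ℕ) : Cz (a:ℤ) ((a:ℤ)+2-1) = 0 := Cz_eq_zero (by omega)

lemma Cz_fact (a b : ℕ) (h : b ≤ a) :
    Cz (a:ℤ) (b:ℤ) = (a.factorial : ℚ) / ((b.factorial : ℚ) * ((a-b).factorial : ℚ)) := by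
  unfold Cz
  rw [if_pos ⟨Int.natCast_nonneg b, by exact_mod_cast h⟩]
  simp only [Int.toNat_natCast]
  exact Nat.cast_choose ℚ h

end Rec1


namespace Rec1
section
variable (c : ℕ → ℕ → ℕ → ℕ → ℚ) (Γ : MvPowerSeries (Fin 5) ℚ)
    (hΓ : ∀ s : Fin 5 →₀ ℕ, MvPowerSeries.coeff s Γ =
      c (s 4) (s 1) (s 2) (s 3) * (s 4 : ℚ) ^ (s 0) /
        ((Nat.factorial (s 0) : ℚ) * (Nat.factorial (s 1) : ℚ) *
          (Nat.factorial (s 2) : ℚ) * (Nat.factorial (s 3) : ℚ)))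
include hΓ

lemma cL111 (i j k l : ℕ) : MvPowerSeries.coeff (mk 0 i j k l) (pd 0 (pd 0 (pd 0 Γ))) =
    c l i j k * (l:ℚ)^3 / ((i.factorial : ℚ) * (j.factorial : ℚ) * (k.factorial : ℚ)) := by
  rw [cpd, adds0, cpd, adds0, cpd, adds0, hΓ]
  simp only [mk_a0, mk_a1, mk_a2, mk_a3, mk_a4, Nat.factorial_succ, Nat.factorial]
  have h1 : ((i.factorial : ℚ)) ≠ 0 := Nat.cast_ne_zero.mpr i.factorial_ne_zero
  have h2 : ((j.factorial : ℚ)) ≠ 0 := Nat.cast_ne_zero.mpr j.factorial_ne_zero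
  have h3 : ((k.factorial : ℚ)) ≠ 0 := Nat.cast_ne_zero.mpr k.factorial_ne_zero
  push_cast
  field_simp
  ring

lemma cL112 (i j k l : ℕ) : MvPowerSeries.coeff (mk 0 i j k l) (pd 0 (pd 0 (pd 1 Γ))) =
    c l (i+1) j k * (l:ℚ)^2 / ((i.factorial : ℚ) * (j.factorial : ℚ) * (k.factorial : ℚ)) := by
  rw [cpd, adds0, cpd, adds0, cpd, adds1, hΓ]
  simp only [mk_a0, mk_a1, mk_a2, mk_a3, mk_a4, Nat.factorial_succ, Nat.factorial]
  have h1 : ((i.factorial : ℚ)) ≠ 0 := Nat.cast_ne_zero.mpr i.factorial_ne_zero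
  have h2 : ((j.factorial : ℚ)) ≠ 0 := Nat.cast_ne_zero.mpr j.factorial_ne_zero
  have h3 : ((k.factorial : ℚ)) ≠ 0 := Nat.cast_ne_zero.mpr k.factorial_ne_zero
  push_cast
  field_simp
  ring

lemma cL122 (i j k l : ℕ) : MvPowerSeries.coeff (mk 0 i j k l) (pd 0 (pd 1 (pd 1 Γ))) =
    c l (i+2) j k * (l:ℚ) / ((i.factorial : ℚ) * (j.factorial : ℚ) * (k.factorial : ℚ)) := by
  rw [cpd, adds0, cpd, adds1, cpd, adds1, hΓ]
  rw [show i+1+1 = i+2 by omega]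
  simp only [mk_a0, mk_a1, mk_a2, mk_a3, mk_a4, Nat.factorial_succ, Nat.factorial]
  have h1 : ((i.factorial : ℚ)) ≠ 0 := Nat.cast_ne_zero.mpr i.factorial_ne_zero
  have h2 : ((j.factorial : ℚ)) ≠ 0 := Nat.cast_ne_zero.mpr j.factorial_ne_zero
  have h3 : ((k.factorial : ℚ)) ≠ 0 := Nat.cast_ne_zero.mpr k.factorial_ne_zero
  push_cast
  field_simp
  ring

lemma cL123 (i j k l : ℕ) : MvPowerSeries.coeff (mk 0 i j k l) (pd 0 (pd 1 (pd 2 Γ))) =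
    c l (i+1) (j+1) k * (l:ℚ) / ((i.factorial : ℚ) * (j.factorial : ℚ) * (k.factorial : ℚ)) := by
  rw [cpd, adds0, cpd, adds1, cpd, adds2, hΓ]
  simp only [mk_a0, mk_a1, mk_a2, mk_a3, mk_a4, Nat.factorial_succ, Nat.factorial]
  have h1 : ((i.factorial : ℚ)) ≠ 0 := Nat.cast_ne_zero.mpr i.factorial_ne_zero
  have h2 : ((j.factorial : ℚ)) ≠ 0 := Nat.cast_ne_zero.mpr j.factorial_ne_zero
  have h3 : ((k.factorial : ℚ)) ≠ 0 := Nat.cast_ne_zero.mpr k.factorial_ne_zero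
  push_cast
  field_simp
  ring

lemma cL124 (i j k l : ℕ) : MvPowerSeries.coeff (mk 0 i j k l) (pd 0 (pd 1 (pd 3 Γ))) =
    c l (i+1) j (k+1) * (l:ℚ) / ((i.factorial : ℚ) * (j.factorial : ℚ) * (k.factorial : ℚ)) := by
  rw [cpd, adds0, cpd, adds1, cpd, adds3, hΓ]
  simp only [mk_a0, mk_a1, mk_a2, mk_a3, mk_a4, Nat.factorial_succ, Nat.factorial]
  have h1 : ((i.factorial : ℚ)) ≠ 0 := Nat.cast_ne_zero.mpr i.factorial_ne_zero
  have h2 : ((j.factorial : ℚ)) ≠ 0 := Nat.cast_ne_zero.mpr j.factorial_ne_zero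
  have h3 : ((k.factorial : ℚ)) ≠ 0 := Nat.cast_ne_zero.mpr k.factorial_ne_zero
  push_cast
  field_simp
  ring

lemma cL113 (i j k l : ℕ) : MvPowerSeries.coeff (mk 0 i j k l) (pd 0 (pd 0 (pd 2 Γ))) =
    c l i (j+1) k * (l:ℚ)^2 / ((i.factorial : ℚ) * (j.factorial : ℚ) * (k.factorial : ℚ)) := by
  rw [cpd, adds0, cpd, adds0, cpd, adds2, hΓ]
  simp only [mk_a0, mk_a1, mk_a2, mk_a3, mk_a4, Nat.factorial_succ, Nat.factorial]
  have h1 : ((i.factorial : ℚ)) ≠ 0 := Nat.cast_ne_zero.mpr i.factorial_ne_zero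
  have h2 : ((j.factorial : ℚ)) ≠ 0 := Nat.cast_ne_zero.mpr j.factorial_ne_zero
  have h3 : ((k.factorial : ℚ)) ≠ 0 := Nat.cast_ne_zero.mpr k.factorial_ne_zero
  push_cast
  field_simp
  ring

lemma cL224 (i j k l : ℕ) : MvPowerSeries.coeff (mk 0 i j k l) (pd 1 (pd 1 (pd 3 Γ))) =
    c l (i+2) j (k+1) / ((i.factorial : ℚ) * (j.factorial : ℚ) * (k.factorial : ℚ)) := by
  rw [cpd, adds1, cpd, adds1, cpd, adds3, hΓ]
  rw [show i+1+1 = i+2 by omega]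
  simp only [mk_a0, mk_a1, mk_a2, mk_a3, mk_a4, Nat.factorial_succ, Nat.factorial, pow_zero]
  have h1 : ((i.factorial : ℚ)) ≠ 0 := Nat.cast_ne_zero.mpr i.factorial_ne_zero
  have h2 : ((j.factorial : ℚ)) ≠ 0 := Nat.cast_ne_zero.mpr j.factorial_ne_zero
  have h3 : ((k.factorial : ℚ)) ≠ 0 := Nat.cast_ne_zero.mpr k.factorial_ne_zero
  push_cast
  field_simp

lemma cL114 (i j k l : ℕ) : MvPowerSeries.coeff (mk 0 i j k l) (pd 0 (pd 0 (pd 3 Γ))) =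
    c l i j (k+1) * (l:ℚ)^2 / ((i.factorial : ℚ) * (j.factorial : ℚ) * (k.factorial : ℚ)) := by
  rw [cpd, adds0, cpd, adds0, cpd, adds3, hΓ]
  simp only [mk_a0, mk_a1, mk_a2, mk_a3, mk_a4, Nat.factorial_succ, Nat.factorial]
  have h1 : ((i.factorial : ℚ)) ≠ 0 := Nat.cast_ne_zero.mpr i.factorial_ne_zero
  have h2 : ((j.factorial : ℚ)) ≠ 0 := Nat.cast_ne_zero.mpr j.factorial_ne_zero
  have h3 : ((k.factorial : ℚ)) ≠ 0 := Nat.cast_ne_zero.mpr k.factorial_ne_zero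
  push_cast
  field_simp
  ring

lemma cL223 (i j k l : ℕ) : MvPowerSeries.coeff (mk 0 i j k l) (pd 1 (pd 1 (pd 2 Γ))) =
    c l (i+2) (j+1) k / ((i.factorial : ℚ) * (j.factorial : ℚ) * (k.factorial : ℚ)) := by
  rw [cpd, adds1, cpd, adds1, cpd, adds2, hΓ]
  rw [show i+1+1 = i+2 by omega]
  simp only [mk_a0, mk_a1, mk_a2, mk_a3, mk_a4, Nat.factorial_succ, Nat.factorial, pow_zero]
  have h1 : ((i.factorial : ℚ)) ≠ 0 := Nat.cast_ne_zero.mpr i.factorial_ne_zero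
  have h2 : ((j.factorial : ℚ)) ≠ 0 := Nat.cast_ne_zero.mpr j.factorial_ne_zero
  have h3 : ((k.factorial : ℚ)) ≠ 0 := Nat.cast_ne_zero.mpr k.factorial_ne_zero
  push_cast
  field_simp

lemma cL222 (n b e d : ℕ) : MvPowerSeries.coeff (mk 0 n b e d) (pd 1 (pd 1 (pd 1 Γ))) =
    c d (n+3) b e / ((n.factorial : ℚ) * (b.factorial : ℚ) * (e.factorial : ℚ)) := by
  rw [cpd, adds1, cpd, adds1, cpd, adds1, hΓ]
  rw [show n+1+1+1 = n+3 by omega]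
  simp only [mk_a0, mk_a1, mk_a2, mk_a3, mk_a4, Nat.factorial_succ, Nat.factorial, pow_zero]
  have h1 : ((n.factorial : ℚ)) ≠ 0 := Nat.cast_ne_zero.mpr n.factorial_ne_zero
  have h2 : ((b.factorial : ℚ)) ≠ 0 := Nat.cast_ne_zero.mpr b.factorial_ne_zero
  have h3 : ((e.factorial : ℚ)) ≠ 0 := Nat.cast_ne_zero.mpr e.factorial_ne_zero
  push_cast
  field_simp
  ring

end
end Rec1

namespace Rec1

noncomputable def S1 (c : ℕ → ℕ → ℕ → ℕ → ℚ) (d n b e : ℕ) : ℚ :=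
  ∑ l ∈ Finset.range (d+1), ∑ i ∈ Finset.range (n+1), ∑ j ∈ Finset.range (b+1),
    ∑ k ∈ Finset.range (e+1),
    (c l (i+1) j k * (l:ℚ)^2 / ((i.factorial : ℚ) * (j.factorial : ℚ) * (k.factorial : ℚ))) *
    (c (d-l) (n-i+1) (b-j) (e-k) * (((d-l : ℕ)):ℚ)^2 /
      (((n-i).factorial : ℚ) * ((b-j).factorial : ℚ) * ((e-k).factorial : ℚ)))

noncomputable def S2 (c : ℕ → ℕ → ℕ → ℕ → ℚ) (d n b e : ℕ) : ℚ :=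
  ∑ l ∈ Finset.range (d+1), ∑ i ∈ Finset.range (n+1), ∑ j ∈ Finset.range (b+1),
    ∑ k ∈ Finset.range (e+1),
    (c l i j k * (l:ℚ)^3 / ((i.factorial : ℚ) * (j.factorial : ℚ) * (k.factorial : ℚ))) *
    (c (d-l) (n-i+2) (b-j) (e-k) * (((d-l : ℕ)):ℚ) /
      (((n-i).factorial : ℚ) * ((b-j).factorial : ℚ) * ((e-k).factorial : ℚ)))

noncomputable def S3 (c : ℕ → ℕ → ℕ → ℕ → ℚ) (d n b e : ℕ) : ℚ :=
  ∑ l ∈ Finset.range (d+1), ∑ i ∈ Finset.range (n+1), ∑ j ∈ Finset.range (b+1),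
    ∑ k ∈ Finset.range (e+1),
    (c l (i+1) (j+1) k * (l:ℚ) / ((i.factorial : ℚ) * (j.factorial : ℚ) * (k.factorial : ℚ))) *
    (c (d-l) (n-i+1) (b-j) (e-k+1) * (((d-l : ℕ)):ℚ) /
      (((n-i).factorial : ℚ) * ((b-j).factorial : ℚ) * ((e-k).factorial : ℚ)))

noncomputable def S4 (c : ℕ → ℕ → ℕ → ℕ → ℚ) (d n b e : ℕ) : ℚ :=
  ∑ l ∈ Finset.range (d+1), ∑ i ∈ Finset.range (n+1), ∑ j ∈ Finset.range (b+1),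
    ∑ k ∈ Finset.range (e+1),
    (c l i (j+1) k * (l:ℚ)^2 / ((i.factorial : ℚ) * (j.factorial : ℚ) * (k.factorial : ℚ))) *
    (c (d-l) (n-i+2) (b-j) (e-k+1) /
      (((n-i).factorial : ℚ) * ((b-j).factorial : ℚ) * ((e-k).factorial : ℚ)))

noncomputable def S5 (c : ℕ → ℕ → ℕ → ℕ → ℚ) (d n b e : ℕ) : ℚ :=
  ∑ l ∈ Finset.range (d+1), ∑ i ∈ Finset.range (n+1), ∑ j ∈ Finset.range (b+1),
    ∑ k ∈ Finset.range (e+1),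
    (c l i j (k+1) * (l:ℚ)^2 / ((i.factorial : ℚ) * (j.factorial : ℚ) * (k.factorial : ℚ))) *
    (c (d-l) (n-i+2) (b-j+1) (e-k) /
      (((n-i).factorial : ℚ) * ((b-j).factorial : ℚ) * ((e-k).factorial : ℚ)))

section
variable (c : ℕ → ℕ → ℕ → ℕ → ℚ) (Γ : MvPowerSeries (Fin 5) ℚ)
    (hΓ : ∀ s : Fin 5 →₀ ℕ, MvPowerSeries.coeff s Γ =
      c (s 4) (s 1) (s 2) (s 3) * (s 4 : ℚ) ^ (s 0) /
        ((Nat.factorial (s 0) : ℚ) * (Nat.factorial (s 1) : ℚ) *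
          (Nat.factorial (s 2) : ℚ) * (Nat.factorial (s 3) : ℚ)))
include hΓ

lemma cAA (n b e d : ℕ) :
    MvPowerSeries.coeff (mk 0 n b e d) (pd 0 (pd 0 (pd 1 Γ)) * pd 0 (pd 0 (pd 1 Γ))) =
      S1 c d n b e := by
  rw [coeff_mul_mk]; unfold S1
  refine Finset.sum_congr rfl fun l _ => Finset.sum_congr rfl fun i _ =>
    Finset.sum_congr rfl fun j _ => Finset.sum_congr rfl fun k _ => ?_
  rw [cL112 c Γ hΓ, cL112 c Γ hΓ]

lemma cBC (n b e d : ℕ) :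
    MvPowerSeries.coeff (mk 0 n b e d) (pd 0 (pd 0 (pd 0 Γ)) * pd 0 (pd 1 (pd 1 Γ))) =
      S2 c d n b e := by
  rw [coeff_mul_mk]; unfold S2
  refine Finset.sum_congr rfl fun l _ => Finset.sum_congr rfl fun i _ =>
    Finset.sum_congr rfl fun j _ => Finset.sum_congr rfl fun k _ => ?_
  rw [cL111 c Γ hΓ, cL122 c Γ hΓ]

lemma cDE (n b e d : ℕ) :
    MvPowerSeries.coeff (mk 0 n b e d) (pd 0 (pd 1 (pd 2 Γ)) * pd 0 (pd 1 (pd 3 Γ))) =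
      S3 c d n b e := by
  rw [coeff_mul_mk]; unfold S3
  refine Finset.sum_congr rfl fun l _ => Finset.sum_congr rfl fun i _ =>
    Finset.sum_congr rfl fun j _ => Finset.sum_congr rfl fun k _ => ?_
  rw [cL123 c Γ hΓ, cL124 c Γ hΓ]

lemma cFG (n b e d : ℕ) :
    MvPowerSeries.coeff (mk 0 n b e d) (pd 0 (pd 0 (pd 2 Γ)) * pd 1 (pd 1 (pd 3 Γ))) =
      S4 c d n b e := by
  rw [coeff_mul_mk]; unfold S4
  refine Finset.sum_congr rfl fun l _ => Finset.sum_congr rfl fun i _ =>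
    Finset.sum_congr rfl fun j _ => Finset.sum_congr rfl fun k _ => ?_
  rw [cL113 c Γ hΓ, cL224 c Γ hΓ]

lemma cHI (n b e d : ℕ) :
    MvPowerSeries.coeff (mk 0 n b e d) (pd 0 (pd 0 (pd 3 Γ)) * pd 1 (pd 1 (pd 2 Γ))) =
      S5 c d n b e := by
  rw [coeff_mul_mk]; unfold S5
  refine Finset.sum_congr rfl fun l _ => Finset.sum_congr rfl fun i _ =>
    Finset.sum_congr rfl fun j _ => Finset.sum_congr rfl fun k _ => ?_
  rw [cL114 c Γ hΓ, cL223 c Γ hΓ]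

end
end Rec1

set_option maxHeartbeats 2000000 in
open Rec1 in
/-- If `Γ` satisfies the associativity relation
`Γ₂₂₂ = Γ₁₁₂² - Γ₁₁₁Γ₁₂₂ + 2(2Γ₁₂₃Γ₁₂₄ - Γ₁₁₃Γ₂₂₄ - Γ₁₁₄Γ₂₂₃)`, then the stated recursion
holds for all `d ≥ 1`, `n₂ ≥ 3`, `n₃, n₄ ≥ 0`. -/
theorem recursion_one
    (c : ℕ → ℕ → ℕ → ℕ → ℚ) (hc0 : ∀ n₂ n₃ n₄, c 0 n₂ n₃ n₄ = 0)
    (Γ : MvPowerSeries (Fin 5) ℚ)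
    (hΓ : ∀ s : Fin 5 →₀ ℕ, MvPowerSeries.coeff s Γ =
      c (s 4) (s 1) (s 2) (s 3) * (s 4 : ℚ) ^ (s 0) /
        ((Nat.factorial (s 0) : ℚ) * (Nat.factorial (s 1) : ℚ) *
          (Nat.factorial (s 2) : ℚ) * (Nat.factorial (s 3) : ℚ)))
    (hrel : pd 1 (pd 1 (pd 1 Γ)) =
      (pd 0 (pd 0 (pd 1 Γ))) ^ 2 - (pd 0 (pd 0 (pd 0 Γ))) * (pd 0 (pd 1 (pd 1 Γ))) +
        2 * (2 * (pd 0 (pd 1 (pd 2 Γ))) * (pd 0 (pd 1 (pd 3 Γ))) -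
          (pd 0 (pd 0 (pd 2 Γ))) * (pd 1 (pd 1 (pd 3 Γ))) -
          (pd 0 (pd 0 (pd 3 Γ))) * (pd 1 (pd 1 (pd 2 Γ))))) :
    ∀ d n₂ n₃ n₄ : ℕ, 1 ≤ d → 3 ≤ n₂ →
      c d n₂ n₃ n₄ =
        (∑ d₁ ∈ Finset.Ioo 0 d, ∑ p₂ ∈ Finset.range n₂, ∑ p₃ ∈ Finset.range (n₃ + 1),
          ∑ p₄ ∈ Finset.range (n₄ + 1),
            c d₁ p₂ p₃ p₄ * c (d - d₁) (n₂ - 1 - p₂) (n₃ - p₃) (n₄ - p₄) *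
              Cz (n₃ : ℤ) (p₃ : ℤ) * Cz (n₄ : ℤ) (p₄ : ℤ) *
              ((d₁ : ℚ) ^ 2 * ((d - d₁ : ℕ) : ℚ) ^ 2 * Cz ((n₂ : ℤ) - 3) ((p₂ : ℤ) - 1) -
                (d₁ : ℚ) ^ 3 * ((d - d₁ : ℕ) : ℚ) * Cz ((n₂ : ℤ) - 3) (p₂ : ℤ))) +
        (∑ d₁ ∈ Finset.Ioo 0 d, ∑ p₂ ∈ Finset.range n₂, ∑ p₃ ∈ Finset.range (n₃ + 2),
          ∑ p₄ ∈ Finset.range (n₄ + 2),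
            2 * c d₁ p₂ p₃ p₄ * c (d - d₁) (n₂ - 1 - p₂) (n₃ + 1 - p₃) (n₄ + 1 - p₄) *
              Cz (n₃ : ℤ) ((p₃ : ℤ) - 1) * Cz (n₄ : ℤ) (p₄ : ℤ) *
              (2 * (d₁ : ℚ) * ((d - d₁ : ℕ) : ℚ) * Cz ((n₂ : ℤ) - 3) ((p₂ : ℤ) - 1) -
                (d₁ : ℚ) ^ 2 * Cz ((n₂ : ℤ) - 3) (p₂ : ℤ) -
                ((d - d₁ : ℕ) : ℚ) ^ 2 * Cz ((n₂ : ℤ) - 3) ((p₂ : ℤ) - 2))) := by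
  intro d n₂ n₃ n₄ hd hn
  obtain ⟨n, rfl⟩ : ∃ n, n₂ = n + 3 := ⟨n₂ - 3, by omega⟩
  have hN : ((n.factorial : ℚ) * (n₃.factorial : ℚ) * (n₄.factorial : ℚ)) ≠ 0 := by positivity
  have hrel' : pd 1 (pd 1 (pd 1 Γ)) =
      pd 0 (pd 0 (pd 1 Γ)) * pd 0 (pd 0 (pd 1 Γ)) -
        pd 0 (pd 0 (pd 0 Γ)) * pd 0 (pd 1 (pd 1 Γ))
      + (pd 0 (pd 1 (pd 2 Γ)) * pd 0 (pd 1 (pd 3 Γ)) +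
          pd 0 (pd 1 (pd 2 Γ)) * pd 0 (pd 1 (pd 3 Γ)) +
          pd 0 (pd 1 (pd 2 Γ)) * pd 0 (pd 1 (pd 3 Γ)) +
          pd 0 (pd 1 (pd 2 Γ)) * pd 0 (pd 1 (pd 3 Γ)))
      - (pd 0 (pd 0 (pd 2 Γ)) * pd 1 (pd 1 (pd 3 Γ)) +
          pd 0 (pd 0 (pd 2 Γ)) * pd 1 (pd 1 (pd 3 Γ)))
      - (pd 0 (pd 0 (pd 3 Γ)) * pd 1 (pd 1 (pd 2 Γ)) +
          pd 0 (pd 0 (pd 3 Γ)) * pd 1 (pd 1 (pd 2 Γ))) := by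
    linear_combination hrel
  have h := congrArg (MvPowerSeries.coeff (Rec1.mk 0 n n₃ n₄ d)) hrel'
  simp only [map_sub, map_add] at h
  rw [Rec1.cL222 c Γ hΓ] at h
  simp only [Rec1.cAA c Γ hΓ, Rec1.cBC c Γ hΓ, Rec1.cDE c Γ hΓ, Rec1.cFG c Γ hΓ,
    Rec1.cHI c Γ hΓ] at h
  rw [div_eq_iff hN] at h
  have h₁ : (∑ d₁ ∈ Finset.Ioo 0 d, ∑ p₂ ∈ Finset.range (n+3), ∑ p₃ ∈ Finset.range (n₃ + 1),
          ∑ p₄ ∈ Finset.range (n₄ + 1),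
            c d₁ p₂ p₃ p₄ * c (d - d₁) (n + 3 - 1 - p₂) (n₃ - p₃) (n₄ - p₄) *
              Cz (n₃ : ℤ) (p₃ : ℤ) * Cz (n₄ : ℤ) (p₄ : ℤ) *
              ((d₁ : ℚ) ^ 2 * ((d - d₁ : ℕ) : ℚ) ^ 2 * Cz (((n+3 : ℕ) : ℤ) - 3) ((p₂ : ℤ) - 1) -
                (d₁ : ℚ) ^ 3 * ((d - d₁ : ℕ) : ℚ) * Cz (((n+3 : ℕ) : ℤ) - 3) (p₂ : ℤ)))
      = (n.factorial : ℚ) * (n₃.factorial : ℚ) * (n₄.factorial : ℚ) * S1 c d n n₃ n₄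
        - (n.factorial : ℚ) * (n₃.factorial : ℚ) * (n₄.factorial : ℚ) * S2 c d n n₃ n₄ := by
    simp only [show (((n+3 : ℕ)) : ℤ) - 3 = (n : ℤ) from by push_cast; ring]
    simp only [mul_sub, Finset.sum_sub_distrib]
    refine congrArg₂ (· - ·) ?_ ?_
    · unfold S1
      simp only [Finset.mul_sum]
      refine (sum_Ioo_ext d _ ?_ ?_).trans ?_
      · simp [hc0]
      · simp [hc0]
      refine Finset.sum_congr rfl fun l hl => ?_
      refine (sum_shift1 n _ ?_ ?_).trans ?_
      · apply Finset.sum_eq_zero; intro p₃ _; apply Finset.sum_eq_zero; intro p₄ _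
        simp [Cz_neg1]
      · apply Finset.sum_eq_zero; intro p₃ _; apply Finset.sum_eq_zero; intro p₄ _
        simp [CzX1, CzX1']
      refine Finset.sum_congr rfl fun i hi => Finset.sum_congr rfl fun j hj =>
        Finset.sum_congr rfl fun k hk => ?_
      rw [Finset.mem_range] at hl hi hj hk
      have hi' : i ≤ n := by omega
      have hj' : j ≤ n₃ := by omega
      have hk' : k ≤ n₄ := by omega
      rw [show n + 3 - 1 - (i+1) = n - i + 1 from by omega]
      rw [show ((i+1 : ℕ) : ℤ) - 1 = (i : ℤ) from by push_cast; ring]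
      rw [Cz_fact n i hi', Cz_fact n₃ j hj', Cz_fact n₄ k hk']
      have f1 : ((i.factorial : ℚ)) ≠ 0 := Nat.cast_ne_zero.mpr (Nat.factorial_ne_zero _)
      have f2 : ((j.factorial : ℚ)) ≠ 0 := Nat.cast_ne_zero.mpr (Nat.factorial_ne_zero _)
      have f3 : ((k.factorial : ℚ)) ≠ 0 := Nat.cast_ne_zero.mpr (Nat.factorial_ne_zero _)
      have f4 : (((n-i).factorial : ℚ)) ≠ 0 := Nat.cast_ne_zero.mpr (Nat.factorial_ne_zero _)
      have f5 : (((n₃-j).factorial : ℚ)) ≠ 0 := Nat.cast_ne_zero.mpr (Nat.factorial_ne_zero _)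
      have f6 : (((n₄-k).factorial : ℚ)) ≠ 0 := Nat.cast_ne_zero.mpr (Nat.factorial_ne_zero _)
      field_simp
    · unfold S2
      simp only [Finset.mul_sum]
      refine (sum_Ioo_ext d _ ?_ ?_).trans ?_
      · simp [hc0]
      · simp [hc0]
      refine Finset.sum_congr rfl fun l hl => ?_
      refine (sum_shift0 n _ ?_ ?_).trans ?_
      · apply Finset.sum_eq_zero; intro p₃ _; apply Finset.sum_eq_zero; intro p₄ _
        simp [Cz_top1, Cz_top1']
      · apply Finset.sum_eq_zero; intro p₃ _; apply Finset.sum_eq_zero; intro p₄ _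
        simp [Cz_top2, Cz_top2']
      refine Finset.sum_congr rfl fun i hi => Finset.sum_congr rfl fun j hj =>
        Finset.sum_congr rfl fun k hk => ?_
      rw [Finset.mem_range] at hl hi hj hk
      have hi' : i ≤ n := by omega
      have hj' : j ≤ n₃ := by omega
      have hk' : k ≤ n₄ := by omega
      rw [show n + 3 - 1 - i = n - i + 2 from by omega]
      rw [Cz_fact n i hi', Cz_fact n₃ j hj', Cz_fact n₄ k hk']
      have f1 : ((i.factorial : ℚ)) ≠ 0 := Nat.cast_ne_zero.mpr (Nat.factorial_ne_zero _)
      have f2 : ((j.factorial : ℚ)) ≠ 0 := Nat.cast_ne_zero.mpr (Nat.factorial_ne_zero _)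
      have f3 : ((k.factorial : ℚ)) ≠ 0 := Nat.cast_ne_zero.mpr (Nat.factorial_ne_zero _)
      have f4 : (((n-i).factorial : ℚ)) ≠ 0 := Nat.cast_ne_zero.mpr (Nat.factorial_ne_zero _)
      have f5 : (((n₃-j).factorial : ℚ)) ≠ 0 := Nat.cast_ne_zero.mpr (Nat.factorial_ne_zero _)
      have f6 : (((n₄-k).factorial : ℚ)) ≠ 0 := Nat.cast_ne_zero.mpr (Nat.factorial_ne_zero _)
      field_simp
  have h₂ : (∑ d₁ ∈ Finset.Ioo 0 d, ∑ p₂ ∈ Finset.range (n+3), ∑ p₃ ∈ Finset.range (n₃ + 2),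
          ∑ p₄ ∈ Finset.range (n₄ + 2),
            2 * c d₁ p₂ p₃ p₄ * c (d - d₁) (n + 3 - 1 - p₂) (n₃ + 1 - p₃) (n₄ + 1 - p₄) *
              Cz (n₃ : ℤ) ((p₃ : ℤ) - 1) * Cz (n₄ : ℤ) (p₄ : ℤ) *
              (2 * (d₁ : ℚ) * ((d - d₁ : ℕ) : ℚ) * Cz (((n+3 : ℕ) : ℤ) - 3) ((p₂ : ℤ) - 1) -
                (d₁ : ℚ) ^ 2 * Cz (((n+3 : ℕ) : ℤ) - 3) (p₂ : ℤ) -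
                ((d - d₁ : ℕ) : ℚ) ^ 2 * Cz (((n+3 : ℕ) : ℤ) - 3) ((p₂ : ℤ) - 2)))
      = 4 * ((n.factorial : ℚ) * (n₃.factorial : ℚ) * (n₄.factorial : ℚ) * S3 c d n n₃ n₄)
        - 2 * ((n.factorial : ℚ) * (n₃.factorial : ℚ) * (n₄.factorial : ℚ) * S4 c d n n₃ n₄)
        - 2 * ((n.factorial : ℚ) * (n₃.factorial : ℚ) * (n₄.factorial : ℚ) * S5 c d n n₃ n₄) := by
    simp only [show (((n+3 : ℕ)) : ℤ) - 3 = (n : ℤ) from by push_cast; ring]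
    simp only [mul_sub, Finset.sum_sub_distrib]
    refine congrArg₂ (· - ·) (congrArg₂ (· - ·) ?_ ?_) ?_
    · unfold S3
      simp only [Finset.mul_sum]
      refine (sum_Ioo_ext d _ ?_ ?_).trans ?_
      · simp [hc0]
      · simp [hc0]
      refine Finset.sum_congr rfl fun l hl => ?_
      refine (sum_shift1 n _ ?_ ?_).trans ?_
      · apply Finset.sum_eq_zero; intro p₃ _; apply Finset.sum_eq_zero; intro p₄ _
        simp [Cz_neg1]
      · apply Finset.sum_eq_zero; intro p₃ _; apply Finset.sum_eq_zero; intro p₄ _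
        simp [CzX1, CzX1']
      refine Finset.sum_congr rfl fun i hi => ?_
      refine (sum_shiftd1 n₃ _ ?_).trans ?_
      · apply Finset.sum_eq_zero; intro p₄ _
        simp [Cz_neg1]
      refine Finset.sum_congr rfl fun j hj => ?_
      refine (sum_trunc n₄ _ ?_).trans ?_
      · simp [Cz_top1, Cz_top1']
      refine Finset.sum_congr rfl fun k hk => ?_
      rw [Finset.mem_range] at hl hi hj hk
      have hi' : i ≤ n := by omega
      have hj' : j ≤ n₃ := by omega
      have hk' : k ≤ n₄ := by omega
      rw [show n + 3 - 1 - (i+1) = n - i + 1 from by omega]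
      rw [show n₃ + 1 - (j+1) = n₃ - j from by omega]
      rw [show n₄ + 1 - k = n₄ - k + 1 from by omega]
      rw [show ((i+1 : ℕ) : ℤ) - 1 = (i : ℤ) from by push_cast; ring]
      rw [show ((j+1 : ℕ) : ℤ) - 1 = (j : ℤ) from by push_cast; ring]
      rw [Cz_fact n i hi', Cz_fact n₃ j hj', Cz_fact n₄ k hk']
      have f1 : ((i.factorial : ℚ)) ≠ 0 := Nat.cast_ne_zero.mpr (Nat.factorial_ne_zero _)
      have f2 : ((j.factorial : ℚ)) ≠ 0 := Nat.cast_ne_zero.mpr (Nat.factorial_ne_zero _)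
      have f3 : ((k.factorial : ℚ)) ≠ 0 := Nat.cast_ne_zero.mpr (Nat.factorial_ne_zero _)
      have f4 : (((n-i).factorial : ℚ)) ≠ 0 := Nat.cast_ne_zero.mpr (Nat.factorial_ne_zero _)
      have f5 : (((n₃-j).factorial : ℚ)) ≠ 0 := Nat.cast_ne_zero.mpr (Nat.factorial_ne_zero _)
      have f6 : (((n₄-k).factorial : ℚ)) ≠ 0 := Nat.cast_ne_zero.mpr (Nat.factorial_ne_zero _)
      field_simp
      ring
    · unfold S4
      simp only [Finset.mul_sum]
      refine (sum_Ioo_ext d _ ?_ ?_).trans ?_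
      · simp [hc0]
      · simp [hc0]
      refine Finset.sum_congr rfl fun l hl => ?_
      refine (sum_shift0 n _ ?_ ?_).trans ?_
      · apply Finset.sum_eq_zero; intro p₃ _; apply Finset.sum_eq_zero; intro p₄ _
        simp [Cz_top1, Cz_top1']
      · apply Finset.sum_eq_zero; intro p₃ _; apply Finset.sum_eq_zero; intro p₄ _
        simp [Cz_top2, Cz_top2']
      refine Finset.sum_congr rfl fun i hi => ?_
      refine (sum_shiftd1 n₃ _ ?_).trans ?_
      · apply Finset.sum_eq_zero; intro p₄ _
        simp [Cz_neg1]
      refine Finset.sum_congr rfl fun j hj => ?_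
      refine (sum_trunc n₄ _ ?_).trans ?_
      · simp [Cz_top1, Cz_top1']
      refine Finset.sum_congr rfl fun k hk => ?_
      rw [Finset.mem_range] at hl hi hj hk
      have hi' : i ≤ n := by omega
      have hj' : j ≤ n₃ := by omega
      have hk' : k ≤ n₄ := by omega
      rw [show n + 3 - 1 - i = n - i + 2 from by omega]
      rw [show n₃ + 1 - (j+1) = n₃ - j from by omega]
      rw [show n₄ + 1 - k = n₄ - k + 1 from by omega]
      rw [show ((j+1 : ℕ) : ℤ) - 1 = (j : ℤ) from by push_cast; ring]
      rw [Cz_fact n i hi', Cz_fact n₃ j hj', Cz_fact n₄ k hk']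
      have f1 : ((i.factorial : ℚ)) ≠ 0 := Nat.cast_ne_zero.mpr (Nat.factorial_ne_zero _)
      have f2 : ((j.factorial : ℚ)) ≠ 0 := Nat.cast_ne_zero.mpr (Nat.factorial_ne_zero _)
      have f3 : ((k.factorial : ℚ)) ≠ 0 := Nat.cast_ne_zero.mpr (Nat.factorial_ne_zero _)
      have f4 : (((n-i).factorial : ℚ)) ≠ 0 := Nat.cast_ne_zero.mpr (Nat.factorial_ne_zero _)
      have f5 : (((n₃-j).factorial : ℚ)) ≠ 0 := Nat.cast_ne_zero.mpr (Nat.factorial_ne_zero _)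
      have f6 : (((n₄-k).factorial : ℚ)) ≠ 0 := Nat.cast_ne_zero.mpr (Nat.factorial_ne_zero _)
      field_simp
    · unfold S5
      rw [refl4 d n n₃ n₄]
      simp only [Finset.mul_sum]
      refine (sum_Ioo_ext d _ ?_ ?_).trans ?_
      · simp [hc0]
      · simp [hc0]
      refine Finset.sum_congr rfl fun l hl => ?_
      refine (sum_shift2 n _ ?_ ?_).trans ?_
      · apply Finset.sum_eq_zero; intro p₃ _; apply Finset.sum_eq_zero; intro p₄ _
        simp [Cz_negtwo]
      · apply Finset.sum_eq_zero; intro p₃ _; apply Finset.sum_eq_zero; intro p₄ _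
        simp [Cz_neg1, Cz_one_sub_two]
      refine Finset.sum_congr rfl fun i hi => ?_
      refine (sum_shiftd1 n₃ _ ?_).trans ?_
      · apply Finset.sum_eq_zero; intro p₄ _
        simp [Cz_neg1]
      refine Finset.sum_congr rfl fun j hj => ?_
      refine (sum_trunc n₄ _ ?_).trans ?_
      · simp [Cz_top1, Cz_top1']
      refine Finset.sum_congr rfl fun k hk => ?_
      rw [Finset.mem_range] at hl hi hj hk
      have hl' : l ≤ d := by omega
      have hi' : i ≤ n := by omega
      have hj' : j ≤ n₃ := by omega
      have hk' : k ≤ n₄ := by omega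
      rw [show d - (d - l) = l from by omega]
      rw [show n - (n - i) = i from by omega]
      rw [show n₃ - (n₃ - j) = j from by omega]
      rw [show n₄ - (n₄ - k) = k from by omega]
      rw [show n + 3 - 1 - (i+2) = n - i from by omega]
      rw [show n₃ + 1 - (j+1) = n₃ - j from by omega]
      rw [show n₄ + 1 - k = n₄ - k + 1 from by omega]
      rw [show ((i+2 : ℕ) : ℤ) - 2 = (i : ℤ) from by push_cast; ring]
      rw [show ((j+1 : ℕ) : ℤ) - 1 = (j : ℤ) from by push_cast; ring]
      rw [Cz_fact n i hi', Cz_fact n₃ j hj', Cz_fact n₄ k hk']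
      have f1 : ((i.factorial : ℚ)) ≠ 0 := Nat.cast_ne_zero.mpr (Nat.factorial_ne_zero _)
      have f2 : ((j.factorial : ℚ)) ≠ 0 := Nat.cast_ne_zero.mpr (Nat.factorial_ne_zero _)
      have f3 : ((k.factorial : ℚ)) ≠ 0 := Nat.cast_ne_zero.mpr (Nat.factorial_ne_zero _)
      have f4 : (((n-i).factorial : ℚ)) ≠ 0 := Nat.cast_ne_zero.mpr (Nat.factorial_ne_zero _)
      have f5 : (((n₃-j).factorial : ℚ)) ≠ 0 := Nat.cast_ne_zero.mpr (Nat.factorial_ne_zero _)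
      have f6 : (((n₄-k).factorial : ℚ)) ≠ 0 := Nat.cast_ne_zero.mpr (Nat.factorial_ne_zero _)
      field_simp
  rw [h₁, h₂, h]
  ring
end
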